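/- (Second-order condition.) Fix n ≥ 1, σ > 0, μ ∈ ℝ, ρ = μ/σ, p = Φ(ρ), q = Φ(−ρ), f = φ(ρ), ν = σ·f/√(q·p·n). Define g : ℝ → ℝ by g(α) = μ·Φ(τ(α)) + ν·φ(τ(α)), where τ(α) = (p − α)·√(n/(q·p)), and let α̂₀ = p·(1 − q·ρ/f). Then the second derivative of g at α̂₀ is strictly negative. -/

import Mathlib

open MeasureTheory ProbabilityTheory

/-- The standard normal density φ(t) = (2π)^{-1/2} e^{-t²/2}. -/
noncomputable def stdNormalPDF (t : ℝ) : ℝ :=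
  (Real.sqrt (2 * Real.pi))⁻¹ * Real.exp (-t ^ 2 / 2)

/-- The standard normal distribution function Φ(x) = ∫_{-∞}^x φ(t) dt. -/
noncomputable def stdNormalCDF (x : ℝ) : ℝ :=
  ∫ t in Set.Iic x, stdNormalPDF t

/-! With `s = √(n/(qp))` and `τ(α) = (p - α) s`, the identities `Φ' = φ` and `φ'(t) = -t φ(t)` give
`g'(α) = s φ(τ) (ν τ - μ)` and `g''(α) = s² φ(τ) (τ (ν τ - μ) - ν)`. The estimate `α̂₀` is exactly
the critical point `ν τ(α̂₀) = μ`, where `g''(α̂₀) = -s² ν φ(τ(α̂₀)) < 0` since `n, σ, f > 0`. -/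

lemma stdNormalPDF_pos (t : ℝ) : 0 < stdNormalPDF t := by
  unfold stdNormalPDF
  positivity

lemma continuous_stdNormalPDF : Continuous stdNormalPDF := by
  unfold stdNormalPDF
  fun_prop

lemma integrable_stdNormalPDF : Integrable stdNormalPDF := by
  refine ((integrable_exp_neg_mul_sq one_half_pos).const_mul
    (Real.sqrt (2 * Real.pi))⁻¹).congr (Filter.Eventually.of_forall fun x => ?_)
  simp only [stdNormalPDF]
  ring_nf

lemma hasDerivAt_stdNormalPDF (t : ℝ) :
    HasDerivAt stdNormalPDF (-t * stdNormalPDF t) t := by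
  have hexp : HasDerivAt (fun x : ℝ => Real.exp (-x ^ 2 / 2)) (Real.exp (-t ^ 2 / 2) * (-t)) t :=
    (Real.hasDerivAt_exp _).comp t <|
      ((hasDerivAt_pow 2 t).neg.div_const 2).congr_deriv (by push_cast; ring)
  unfold stdNormalPDF
  exact (hexp.const_mul _).congr_deriv (by ring)

lemma stdNormalCDF_eq_add_intervalIntegral (x : ℝ) :
    stdNormalCDF x = stdNormalCDF 0 + ∫ t in (0 : ℝ)..x, stdNormalPDF t := by
  have := intervalIntegral.integral_Iic_sub_Iic
    (integrable_stdNormalPDF.integrableOn (s := Set.Iic 0))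
    (integrable_stdNormalPDF.integrableOn (s := Set.Iic x))
  unfold stdNormalCDF
  linarith

lemma hasDerivAt_stdNormalCDF (x : ℝ) : HasDerivAt stdNormalCDF (stdNormalPDF x) x := by
  rw [funext stdNormalCDF_eq_add_intervalIntegral]
  refine (intervalIntegral.integral_hasDerivAt_right integrable_stdNormalPDF.intervalIntegrable
    (continuous_stdNormalPDF.stronglyMeasurableAtFilter _ _)
    continuous_stdNormalPDF.continuousAt).const_add _

lemma stdNormalCDF_pos (x : ℝ) : 0 < stdNormalCDF x := by
  unfold stdNormalCDF
  rw [setIntegral_pos_iff_support_of_nonneg_ae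
    (Filter.Eventually.of_forall fun t => (stdNormalPDF_pos t).le)
    integrable_stdNormalPDF.integrableOn]
  have : Function.support stdNormalPDF = Set.univ :=
    Set.eq_univ_of_forall fun t => (stdNormalPDF_pos t).ne'
  simp [this, Real.volume_Iic]

/-- The paper's `g`, with `τ(α) = (c - α) s`. -/
noncomputable def smoothedIncrement (μ ν c s α : ℝ) : ℝ :=
  μ * stdNormalCDF ((c - α) * s) + ν * stdNormalPDF ((c - α) * s)

section smoothedIncrement

variable (μ ν c s : ℝ)

lemma hasDerivAt_const_sub_mul (α : ℝ) : HasDerivAt (fun a => (c - a) * s) (-s) α := by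
  simpa using ((hasDerivAt_id α).const_sub c).mul_const s

lemma hasDerivAt_smoothedIncrement (α : ℝ) :
    HasDerivAt (smoothedIncrement μ ν c s)
      (s * stdNormalPDF ((c - α) * s) * (ν * ((c - α) * s) - μ)) α := by
  have hτ := hasDerivAt_const_sub_mul c s α
  exact (((hasDerivAt_stdNormalCDF _).comp α hτ).const_mul μ
    |>.add (((hasDerivAt_stdNormalPDF _).comp α hτ).const_mul ν)).congr_deriv (by ring)

lemma deriv_smoothedIncrement :
    deriv (smoothedIncrement μ ν c s) =
      fun α => s * stdNormalPDF ((c - α) * s) * (ν * ((c - α) * s) - μ) :=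
  funext fun α => (hasDerivAt_smoothedIncrement μ ν c s α).deriv

lemma deriv_deriv_smoothedIncrement (α : ℝ) :
    deriv (deriv (smoothedIncrement μ ν c s)) α =
      s ^ 2 * stdNormalPDF ((c - α) * s) *
        ((c - α) * s * (ν * ((c - α) * s) - μ) - ν) := by
  have hτ := hasDerivAt_const_sub_mul c s α
  have hD := (((hasDerivAt_stdNormalPDF _).comp α hτ).const_mul s).mul
    ((hτ.const_mul ν).sub_const μ)
  rw [deriv_smoothedIncrement]
  refine hD.deriv.trans ?_
  simp only [Function.comp]
  ring

lemma deriv_deriv_smoothedIncrement_of_critical {α : ℝ} (h : ν * ((c - α) * s) = μ) :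
    deriv (deriv (smoothedIncrement μ ν c s)) α = -(s ^ 2 * ν * stdNormalPDF ((c - α) * s)) := by
  rw [deriv_deriv_smoothedIncrement, h, sub_self]
  ring

end smoothedIncrement

/-- Second-order condition: the second derivative of the smoothed expected
increment at α̂₀ = p(1 − qρ/f) is strictly negative. -/
theorem second_order_condition
    (n : ℕ) (hn : 1 ≤ n) (μ σ : ℝ) (hσ : 0 < σ)
    (ρ p q f ν α₀ : ℝ) (hρ : ρ = μ / σ) (hp : p = stdNormalCDF ρ) (hq : q = stdNormalCDF (-ρ))
    (hf : f = stdNormalPDF ρ) (hν : ν = σ * f / Real.sqrt (q * p * n))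
    (hα₀ : α₀ = p * (1 - q * ρ / f))
    (τ g : ℝ → ℝ)
    (hτ : ∀ α, τ α = (p - α) * Real.sqrt (n / (q * p)))
    (hg : ∀ α, g α = μ * stdNormalCDF (τ α) + ν * stdNormalPDF (τ α)) :
    deriv (deriv g) α₀ < 0 := by
  set s := Real.sqrt (n / (q * p))
  have hqp : 0 < q * p := mul_pos (hq ▸ stdNormalCDF_pos _) (hp ▸ stdNormalCDF_pos _)
  have hn0 : (0 : ℝ) < n := by exact_mod_cast hn
  have hf0 : 0 < f := hf ▸ stdNormalPDF_pos ρ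
  have hs : 0 < s := Real.sqrt_pos.mpr (div_pos hn0 hqp)
  have hν0 : 0 < ν := hν ▸ div_pos (mul_pos hσ hf0) (Real.sqrt_pos.mpr (by positivity))
  have hg_eq : g = smoothedIncrement μ ν p s := funext fun α => by
    rw [hg, hτ]; rfl
  have hcrit : ν * ((p - α₀) * s) = μ := by
    have hpα : p - α₀ = p * q * ρ / f := by rw [hα₀]; field_simp; ring
    rw [hν, hpα, show s = Real.sqrt n / Real.sqrt (q * p) from Real.sqrt_div hn0.le _,
      Real.sqrt_mul hqp.le, hρ]
    have := Real.sqrt_pos.mpr hn0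
    have := Real.mul_self_sqrt hqp.le
    field_simp
    grind
  rw [hg_eq, deriv_deriv_smoothedIncrement_of_critical μ ν p s hcrit, neg_lt_zero]
  have := stdNormalPDF_pos ((p - α₀) * s)
  positivity
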